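/- Let M be a Markov process with state space S satisfying: there exists a probability measure π on S such that for every x ∈ S, lim_{t→∞} sup_{s ∈ T} ∫_S d_W(p^t(y,·), π) p^s(x,dy) = 0. Then the transition function is weak-* mean ergodic: for every μ ∈ P(S), the Cesàro averages (1/t) ∫_{[0,t)} ( ∫_S p^s(x,·) μ(dx) ) τ(ds) converge weakly to π as t → ∞. -/

import Mathlib

open MeasureTheory Filter Topology

/-- The `L¹`-Wasserstein (Kantorovich–Rubinstein) distance between two measures:
`d_W(μ,ν) = sup { |∫ f dμ - ∫ f dν| : f 1-Lipschitz }`. -/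
noncomputable def wassDist {S : Type*} [MeasurableSpace S] [PseudoMetricSpace S]
    (μ ν : Measure S) : ℝ :=
  ⨆ f : {g : S → ℝ // LipschitzWith 1 g}, |(∫ y, f.1 y ∂μ) - ∫ y, f.1 y ∂ν|

/-- A (normal, temporally homogeneous) discrete-time Markov process: a family of probability
measures `P x` on a sample space `Ω` depending measurably on the starting point `x`, a process
`M` such that `M 0 = x` holds `P x`-a.s., satisfying the Markov property with respect to the
natural filtration, with temporally homogeneous transition function `(P x).map (M t)`. -/
structure DiscreteMarkovProcess (S : Type*) [MeasurableSpace S]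
    (Ω : Type*) [MeasurableSpace Ω] where
  P : S → Measure Ω
  M : ℕ → Ω → S
  prob : ∀ x, IsProbabilityMeasure (P x)
  measM : ∀ n, Measurable (M n)
  measP : Measurable P
  start : ∀ x, (P x).map (M 0) = Measure.dirac x
  markov : ∀ (x : S) (s t : ℕ) (g : S → ℝ), Measurable g → (∃ C, ∀ z, |g z| ≤ C) →
    (P x)[(fun ω => g (M (s + t) ω)) |
        ⨆ u : {u : ℕ // u ≤ s}, MeasurableSpace.comap (M u.1) inferInstance]
      =ᵐ[P x] fun ω => ∫ y, g y ∂((P (M s ω)).map (M t))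

/-- The transition function `p t x (dy) = P^x (M_t ∈ dy)` of a discrete-time Markov process. -/
noncomputable def DiscreteMarkovProcess.p {S : Type*} [MeasurableSpace S]
    {Ω : Type*} [MeasurableSpace Ω] (X : DiscreteMarkovProcess S Ω) (n : ℕ) (x : S) :
    Measure S := (X.P x).map (X.M n)

/-- A (normal, temporally homogeneous) continuous-time Markov process: a family of probability
measures `P x` on a sample space `Ω` depending measurably on the starting point `x`, a process
`M`, progressively measurable with respect to its natural filtration, such that `M 0 = x` holds
`P x`-a.s., satisfying the Markov property with respect to the natural filtration, with
temporally homogeneous transition function `(P x).map (M t)`. -/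
structure ContinuousMarkovProcess (S : Type*) [MeasurableSpace S]
    (Ω : Type*) [MeasurableSpace Ω] where
  P : S → Measure Ω
  M : ℝ → Ω → S
  prob : ∀ x, IsProbabilityMeasure (P x)
  measM : ∀ t, Measurable (M t)
  measP : Measurable P
  prog : ∀ t : ℝ, 0 ≤ t →
    Measurable[MeasurableSpace.prod inferInstance
        (⨆ u : {u : ℝ // 0 ≤ u ∧ u ≤ t}, MeasurableSpace.comap (M u.1) inferInstance)]
      (fun q : Set.Icc (0 : ℝ) t × Ω => M q.1.1 q.2)
  start : ∀ x, (P x).map (M 0) = Measure.dirac x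
  markov : ∀ (x : S) (s t : ℝ), 0 ≤ s → 0 ≤ t → ∀ (g : S → ℝ), Measurable g →
    (∃ C, ∀ z, |g z| ≤ C) →
    (P x)[(fun ω => g (M (s + t) ω)) |
        ⨆ u : {u : ℝ // 0 ≤ u ∧ u ≤ s}, MeasurableSpace.comap (M u.1) inferInstance]
      =ᵐ[P x] fun ω => ∫ y, g y ∂((P (M s ω)).map (M t))

/-- The transition function `p t x (dy) = P^x (M_t ∈ dy)` of a continuous-time Markov process. -/
noncomputable def ContinuousMarkovProcess.p {S : Type*} [MeasurableSpace S]
    {Ω : Type*} [MeasurableSpace Ω] (X : ContinuousMarkovProcess S Ω) (t : ℝ) (x : S) :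
    Measure S := (X.P x).map (X.M t)

/-!
Taking `s = 0` in the hypothesis (where `p⁰(x, ·) = δₓ`) gives `d_W(pᵗ(x, ·), π) → 0` for every
`x`. On a space of bounded diameter, `d_W`-convergence controls the integrals of all Lipschitz
functions, and these already determine weak convergence; hence `∫ g dpᵗ(x, ·) → ∫ g dπ` for every
bounded continuous `g`, and by dominated convergence also after integrating `x` against `μ`.
Cesàro averages of a convergent function have the same limit; in continuous time the substitution
`s = t u` writes the average over `[0, t]` as `∫₀¹ ψ(t u) du`, and dominated convergence applies
once more.
-/

open scoped NNReal BoundedContinuousFunction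
open Set

theorem abs_integral_sub_integral_le_of_abs_sub_le {S : Type*} [MeasurableSpace S]
    {μ ν : Measure S} [IsProbabilityMeasure μ] [IsProbabilityMeasure ν] {f : S → ℝ} {C : ℝ}
    (hμ : Integrable f μ) (hν : Integrable f ν) (hf : ∀ x y, |f x - f y| ≤ C) :
    |(∫ x, f x ∂μ) - ∫ y, f y ∂ν| ≤ C := by
  have h_mean_sub (ρ : Measure S) [IsProbabilityMeasure ρ] (hρ : Integrable f ρ) (c : ℝ) :
      (∫ x, f x ∂ρ) - c = ∫ x, (f x - c) ∂ρ := by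
    rw [integral_sub hρ (integrable_const c), integral_const, probReal_univ, one_smul]
  have h_point (x : S) : |f x - ∫ y, f y ∂ν| ≤ C := by
    rw [← neg_sub, abs_neg, h_mean_sub ν hν, ← Real.norm_eq_abs]
    simpa using norm_integral_le_of_norm_le_const (μ := ν) (f := fun y => f y - f x)
      (Eventually.of_forall fun y => (abs_sub_comm (f y) (f x)).trans_le (hf x y))
  rw [h_mean_sub μ hμ, ← Real.norm_eq_abs]
  simpa using norm_integral_le_of_norm_le_const (μ := μ) (f := fun x => f x - ∫ y, f y ∂ν)
    (Eventually.of_forall h_point)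

section Wasserstein

variable {S : Type*} [MeasurableSpace S] [PseudoMetricSpace S] [OpensMeasurableSpace S]
  {D : ℝ} {μ ν : Measure S} [IsProbabilityMeasure μ] [IsProbabilityMeasure ν]

theorem LipschitzWith.integrable_of_dist_le (hd : ∀ x y : S, dist x y ≤ D) {K : ℝ≥0}
    {f : S → ℝ} (hf : LipschitzWith K f) (ρ : Measure S) [IsFiniteMeasure ρ] :
    Integrable f ρ :=
  (BoundedContinuousFunction.mkOfBound ⟨f, hf.continuous⟩ (K * D) fun x y =>
    (hf.dist_le_mul x y).trans (by gcongr; exact hd x y)).integrable ρ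

theorem LipschitzWith.abs_integral_sub_integral_le (hd : ∀ x y : S, dist x y ≤ D) {K : ℝ≥0}
    {f : S → ℝ} (hf : LipschitzWith K f) :
    |(∫ x, f x ∂μ) - ∫ y, f y ∂ν| ≤ K * D :=
  abs_integral_sub_integral_le_of_abs_sub_le (hf.integrable_of_dist_le hd μ)
    (hf.integrable_of_dist_le hd ν) fun x y =>
      (hf.dist_le_mul x y).trans (by gcongr; exact hd x y)

omit [OpensMeasurableSpace S] [IsProbabilityMeasure μ] [IsProbabilityMeasure ν] in
theorem wassDist_nonneg (μ ν : Measure S) : 0 ≤ wassDist μ ν :=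
  Real.iSup_nonneg fun _ => abs_nonneg _

theorem wassDist_le (hd : ∀ x y : S, dist x y ≤ D) : wassDist μ ν ≤ D := by
  have : Nonempty {g : S → ℝ // LipschitzWith 1 g} := ⟨⟨fun _ => 0, LipschitzWith.const' 0⟩⟩
  exact ciSup_le fun f => by simpa using f.2.abs_integral_sub_integral_le hd (μ := μ) (ν := ν)

theorem abs_integral_sub_integral_le_wassDist (hd : ∀ x y : S, dist x y ≤ D) {f : S → ℝ}
    (hf : LipschitzWith 1 f) : |(∫ x, f x ∂μ) - ∫ y, f y ∂ν| ≤ wassDist μ ν := by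
  refine le_ciSup (f := fun f : {g : S → ℝ // LipschitzWith 1 g} =>
    |(∫ y, f.1 y ∂μ) - ∫ y, f.1 y ∂ν|) ⟨D, ?_⟩ ⟨f, hf⟩
  rintro r ⟨f, rfl⟩
  simpa using f.2.abs_integral_sub_integral_le hd (μ := μ) (ν := ν)

theorem LipschitzWith.abs_integral_sub_integral_le_mul_wassDist (hd : ∀ x y : S, dist x y ≤ D)
    {K : ℝ≥0} {f : S → ℝ} (hf : LipschitzWith K f) :
    |(∫ x, f x ∂μ) - ∫ y, f y ∂ν| ≤ K * wassDist μ ν := by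
  rcases eq_or_ne K 0 with rfl | hK
  · simpa using hf.abs_integral_sub_integral_le hd (μ := μ) (ν := ν)
  have h_normalized : LipschitzWith 1 fun x => (K : ℝ)⁻¹ * f x := by
    have := (lipschitzWith_smul (K : ℝ)⁻¹).comp hf
    simp only [nnnorm_inv, NNReal.nnnorm_eq, inv_mul_cancel₀ hK] at this
    exact this
  have := abs_integral_sub_integral_le_wassDist hd h_normalized (μ := μ) (ν := ν)
  rwa [integral_const_mul, integral_const_mul, ← mul_sub, abs_mul, abs_inv, NNReal.abs_eq,
    inv_mul_le_iff₀ (by positivity)] at this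

omit [IsProbabilityMeasure μ] [IsProbabilityMeasure ν] in
theorem MeasureTheory.ProbabilityMeasure.tendsto_of_tendsto_wassDist {ι : Type*} {L : Filter ι}
    [L.IsCountablyGenerated] (hd : ∀ x y : S, dist x y ≤ D) {μs : ι → ProbabilityMeasure S}
    {μ : ProbabilityMeasure S} (h : Tendsto (fun i => wassDist (μs i : Measure S) μ) L (𝓝 0)) :
    Tendsto μs L (𝓝 μ) := by
  refine tendsto_iff_forall_lipschitz_integral_tendsto.2
    fun f _ ⟨K, hf⟩ => tendsto_iff_dist_tendsto_zero.2 ?_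
  refine squeeze_zero (fun _ => dist_nonneg) (fun i => ?_) (by simpa using h.const_mul (K : ℝ))
  exact hf.abs_integral_sub_integral_le_mul_wassDist hd

end Wasserstein

section Transition

variable {S : Type*} [MeasurableSpace S] [MetricSpace S] [OpensMeasurableSpace S] {D : ℝ}
  {π : Measure S} [IsProbabilityMeasure π]

theorem wassDist_le_iSup_integral_wassDist {σ : Type*} (hd : ∀ x y : S, dist x y ≤ D)
    (q : S → Measure S) [∀ y, IsProbabilityMeasure (q y)]
    (ρ : σ → Measure S) [∀ s, IsProbabilityMeasure (ρ s)] {s₀ : σ} {x : S}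
    (hρ : ρ s₀ = Measure.dirac x) :
    wassDist (q x) π ≤ ⨆ s, ∫ y, wassDist (q y) π ∂ρ s := by
  refine le_ciSup_of_le ⟨D, ?_⟩ s₀ (by rw [hρ, integral_dirac])
  rintro r ⟨s, rfl⟩
  have h_bound (y : S) : ‖wassDist (q y) π‖ ≤ D := by
    rw [Real.norm_of_nonneg (wassDist_nonneg _ _)]
    exact wassDist_le hd
  simpa using (le_abs_self _).trans (norm_integral_le_of_norm_le_const (μ := ρ s)
    (Eventually.of_forall h_bound))

theorem tendsto_wassDist_of_tendsto_iSup_integral {ι σ : Type*} {L : Filter ι}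
    (hd : ∀ x y : S, dist x y ≤ D) (p : ι → S → Measure S) [∀ t y, IsProbabilityMeasure (p t y)]
    (ρ : σ → Measure S) [∀ s, IsProbabilityMeasure (ρ s)] {s₀ : σ} {x : S}
    (hρ : ρ s₀ = Measure.dirac x)
    (h : Tendsto (fun t => ⨆ s, ∫ y, wassDist (p t y) π ∂ρ s) L (𝓝 0)) :
    Tendsto (fun t => wassDist (p t x) π) L (𝓝 0) :=
  squeeze_zero (fun _ => wassDist_nonneg _ _)
    (fun t => wassDist_le_iSup_integral_wassDist hd (p t) ρ hρ) h

theorem tendsto_integral_integral_of_tendsto_wassDist {ι : Type*} {L : Filter ι}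
    [L.IsCountablyGenerated] (hd : ∀ x y : S, dist x y ≤ D) (p : ι → S → Measure S)
    [∀ t y, IsProbabilityMeasure (p t y)] (hp : ∀ t, Measurable (p t))
    (h : ∀ x, Tendsto (fun t => wassDist (p t x) π) L (𝓝 0))
    (μ : Measure S) [IsProbabilityMeasure μ] (g : S →ᵇ ℝ) :
    Tendsto (fun t => ∫ x, ∫ y, g y ∂p t x ∂μ) L (𝓝 (∫ y, g y ∂π)) := by
  have h_pointwise (x : S) : Tendsto (fun t => ∫ y, g y ∂p t x) L (𝓝 (∫ y, g y ∂π)) :=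
    ProbabilityMeasure.tendsto_iff_forall_integral_tendsto.1
      (ProbabilityMeasure.tendsto_of_tendsto_wassDist hd (μs := fun t => ⟨p t x, inferInstance⟩)
        (μ := ⟨π, inferInstance⟩) (h x)) g
  have h_meas (t : ι) : StronglyMeasurable fun x => ∫ y, g y ∂p t x :=
    g.continuous.stronglyMeasurable.integral_kernel (κ := ⟨p t, hp t⟩)
  simpa using tendsto_integral_filter_of_dominated_convergence (μ := μ) (fun _ => ‖g‖)
    (Eventually.of_forall fun t => (h_meas t).aestronglyMeasurable)
    (Eventually.of_forall fun t => Eventually.of_forall fun x => g.norm_integral_le_norm _)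
    (integrable_const _) (Eventually.of_forall h_pointwise)

end Transition

theorem BoundedContinuousFunction.norm_integral_integral_le {S : Type*} [MeasurableSpace S]
    [TopologicalSpace S] [OpensMeasurableSpace S] (g : S →ᵇ ℝ) (p : S → Measure S)
    [∀ x, IsProbabilityMeasure (p x)] (μ : Measure S) [IsProbabilityMeasure μ] :
    ‖∫ x, ∫ y, g y ∂p x ∂μ‖ ≤ ‖g‖ := by
  simpa using norm_integral_le_of_norm_le_const (μ := μ)
    (Eventually.of_forall fun x => g.norm_integral_le_norm (p x))

theorem tendsto_inv_smul_intervalIntegral_of_tendsto {E : Type*} [NormedAddCommGroup E]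
    [NormedSpace ℝ E] [CompleteSpace E] {ψ : ℝ → E} {l : E} {C : ℝ}
    (hψ : ∀ t, 0 < t → IntervalIntegrable ψ volume 0 t) (hC : ∀ s, ‖ψ s‖ ≤ C)
    (h : Tendsto ψ atTop (𝓝 l)) :
    Tendsto (fun t => t⁻¹ • ∫ s in 0..t, ψ s) atTop (𝓝 l) := by
  have h_rescale : ∀ᶠ t in atTop, ∫ u in (0 : ℝ)..1, ψ (t * u) = t⁻¹ • ∫ s in 0..t, ψ s := by
    filter_upwards [eventually_gt_atTop 0] with t ht
    simpa using intervalIntegral.integral_comp_mul_left ψ (a := 0) (b := 1) ht.ne'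
  refine Tendsto.congr' h_rescale ?_
  have h_limit : ∫ _ in (0 : ℝ)..1, l = l := by rw [intervalIntegral.integral_const]; simp
  rw [← h_limit]
  refine intervalIntegral.tendsto_integral_filter_of_dominated_convergence (fun _ => C) ?_
    (Eventually.of_forall fun t => Eventually.of_forall fun u _ => hC (t * u))
    intervalIntegrable_const (Eventually.of_forall fun u hu => ?_)
  · filter_upwards [eventually_gt_atTop 0] with t ht
    have := (hψ t ht).comp_mul_left (c := t)
    rw [zero_div, div_self ht.ne'] at this
    rw [uIoc_of_le zero_le_one]
    exact this.1.aestronglyMeasurable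
  · rw [uIoc_of_le zero_le_one] at hu
    exact h.comp (tendsto_id.atTop_mul_const hu.1)

namespace DiscreteMarkovProcess

variable {S Ω : Type*} [MeasurableSpace S] [MeasurableSpace Ω] (X : DiscreteMarkovProcess S Ω)

instance isProbabilityMeasure_p (n : ℕ) (x : S) : IsProbabilityMeasure (X.p n x) :=
  have := X.prob x
  Measure.isProbabilityMeasure_map (X.measM n).aemeasurable

theorem measurable_p (n : ℕ) : Measurable (X.p n) :=
  (Measure.measurable_map _ (X.measM n)).comp X.measP

end DiscreteMarkovProcess

namespace ContinuousMarkovProcess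

variable {S Ω : Type*} [MeasurableSpace S] [MeasurableSpace Ω] (X : ContinuousMarkovProcess S Ω)

instance isProbabilityMeasure_p (t : ℝ) (x : S) : IsProbabilityMeasure (X.p t x) :=
  have := X.prob x
  Measure.isProbabilityMeasure_map (X.measM t).aemeasurable

theorem measurable_p (t : ℝ) : Measurable (X.p t) :=
  (Measure.measurable_map _ (X.measM t)).comp X.measP

theorem measurable_uncurry_M_Icc {t : ℝ} (ht : 0 ≤ t) :
    Measurable fun q : Icc (0 : ℝ) t × Ω => X.M q.1 q.2 := by
  refine (X.prog t ht).mono (sup_le_sup le_rfl (MeasurableSpace.comap_mono ?_)) le_rfl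
  exact iSup_le fun u => (X.measM u.1).comap_le

theorem stronglyMeasurable_integral_integral_Icc {t : ℝ} (ht : 0 ≤ t) {g : S → ℝ}
    (hg : StronglyMeasurable g) (μ : Measure S) [SFinite μ] :
    StronglyMeasurable fun s : Icc (0 : ℝ) t => ∫ x, ∫ y, g y ∂X.p s x ∂μ := by
  have := X.prob
  let κ : ProbabilityTheory.Kernel (Icc (0 : ℝ) t × S) Ω :=
    ⟨fun q => X.P q.2, X.measP.comp measurable_snd⟩
  have : ProbabilityTheory.IsMarkovKernel κ := ⟨fun q => X.prob q.2⟩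
  have h_joint : StronglyMeasurable fun q : Icc (0 : ℝ) t × S => ∫ ω, g (X.M q.1 ω) ∂κ q :=
    StronglyMeasurable.integral_kernel_prod_right
      (f := fun (q : Icc (0 : ℝ) t × S) ω => g (X.M q.1 ω))
      (hg.comp_measurable ((X.measurable_uncurry_M_Icc ht).comp
        (measurable_fst.fst.prodMk measurable_snd)))
  convert h_joint.integral_prod_right' (ν := μ) using 3 with s
  funext x
  exact integral_map (X.measM s).aemeasurable hg.aestronglyMeasurable

theorem intervalIntegrable_integral_integral [TopologicalSpace S] [OpensMeasurableSpace S]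
    {t : ℝ} (ht : 0 ≤ t) (g : S →ᵇ ℝ) (μ : Measure S) [IsProbabilityMeasure μ] :
    IntervalIntegrable (fun s => ∫ x, ∫ y, g y ∂X.p s x ∂μ) volume 0 t := by
  have h_meas := (X.stronglyMeasurable_integral_integral_Icc ht g.continuous.stronglyMeasurable
    μ).comp_measurable (continuous_projIcc (a := 0) (b := t) (h := ht)).measurable
  rw [intervalIntegrable_iff_integrableOn_Ioc_of_le ht]
  refine (integrable_const ‖g‖).mono' (h_meas.aestronglyMeasurable.congr ?_)
    (Eventually.of_forall fun s => g.norm_integral_integral_le (X.p s) μ)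
  refine (ae_restrict_iff' measurableSet_Ioc).2 (Eventually.of_forall fun s hs => ?_)
  simp [projIcc_of_mem ht (Ioc_subset_Icc_self hs)]

end ContinuousMarkovProcess

/-- Under condition (1.6) the transition function is weak-* mean ergodic: for
every initial distribution `μ`, the Cesàro averages of `∫ p^s(x,·) μ(dx)` converge weakly to
`π` (tested against bounded continuous functions); discrete- and continuous-time cases. -/
theorem weak_star_mean_ergodic :
    (∀ (S : Type) [MeasurableSpace S] [MetricSpace S] [PolishSpace S] [BorelSpace S],
      (∀ x y : S, dist x y ≤ 1) →
      ∀ (Ω : Type) [MeasurableSpace Ω] (X : DiscreteMarkovProcess S Ω)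
        (π : Measure S) [IsProbabilityMeasure π],
      (∀ x : S, Tendsto
        (fun n : ℕ => ⨆ m : ℕ, ∫ y, wassDist (X.p n y) π ∂(X.p m x)) atTop (𝓝 0)) →
      ∀ (μ : Measure S) [IsProbabilityMeasure μ], ∀ g : S → ℝ, Continuous g → (∃ C : ℝ, ∀ z : S, |g z| ≤ C) →
      Tendsto
        (fun n : ℕ => (n : ℝ)⁻¹ * (∑ k ∈ Finset.range n, ∫ x, (∫ y, g y ∂(X.p k x)) ∂μ))
        atTop (𝓝 (∫ y, g y ∂π)))
    ∧
    (∀ (S : Type) [MeasurableSpace S] [MetricSpace S] [PolishSpace S] [BorelSpace S],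
      (∀ x y : S, dist x y ≤ 1) →
      ∀ (Ω : Type) [MeasurableSpace Ω] (X : ContinuousMarkovProcess S Ω)
        (π : Measure S) [IsProbabilityMeasure π],
      (∀ x : S, Tendsto
        (fun t : ℝ => ⨆ s : {s : ℝ // 0 ≤ s}, ∫ y, wassDist (X.p t y) π ∂(X.p s.1 x))
        atTop (𝓝 0)) →
      ∀ (μ : Measure S) [IsProbabilityMeasure μ], ∀ g : S → ℝ, Continuous g → (∃ C : ℝ, ∀ z : S, |g z| ≤ C) →
      Tendsto
        (fun t : ℝ => t⁻¹ * (∫ s in Set.Ico (0 : ℝ) t, (∫ x, (∫ y, g y ∂(X.p s x)) ∂μ)))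
        atTop (𝓝 (∫ y, g y ∂π))) := by
  constructor
  · intro S _ _ _ _ hd Ω _ X π _ h_conv μ _ g hg ⟨C, hC⟩
    let G : S →ᵇ ℝ := .ofNormedAddCommGroup g hg C fun z => (Real.norm_eq_abs _).trans_le (hC z)
    have h_wass (x : S) := tendsto_wassDist_of_tendsto_iSup_integral hd X.p
      (fun m => X.p m x) (X.start x) (h_conv x)
    exact (tendsto_integral_integral_of_tendsto_wassDist hd X.p X.measurable_p h_wass μ G).cesaro
  · intro S _ _ _ _ hd Ω _ X π _ h_conv μ _ g hg ⟨C, hC⟩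
    let G : S →ᵇ ℝ := .ofNormedAddCommGroup g hg C fun z => (Real.norm_eq_abs _).trans_le (hC z)
    have h_wass (x : S) := tendsto_wassDist_of_tendsto_iSup_integral hd X.p
      (fun s : {s : ℝ // 0 ≤ s} => X.p s x) (s₀ := ⟨0, le_rfl⟩) (X.start x) (h_conv x)
    have h_avg := tendsto_inv_smul_intervalIntegral_of_tendsto
      (fun t ht => X.intervalIntegrable_integral_integral ht.le G μ)
      (fun s => G.norm_integral_integral_le (X.p s) μ)
      (tendsto_integral_integral_of_tendsto_wassDist hd X.p X.measurable_p h_wass μ G)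
    refine h_avg.congr' ?_
    filter_upwards [eventually_ge_atTop 0] with t ht
    rw [smul_eq_mul, intervalIntegral.integral_of_le ht, integral_Ioc_eq_integral_Ioo,
      integral_Ico_eq_integral_Ioo]
    rfl
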